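/- arXiv:1309.5190 — 14 statements merged into one kernel-verified Lean document; each statement's English description precedes it below -/
import Mathlib

section
/- Let A be a commutative ring with identity, Y a subset of Spec(A), and 𝒰 an ultrafilter on Y. Then the set 𝔭_𝒰 := {a ∈ A : V(a) ∩ Y ∈ 𝒰} is a prime ideal of A, and with 𝓟 := {D_a : a ∈ A} the collection of principal open subsets of Spec(A), one has Y_𝓟(𝒰) = {𝔭_𝒰}. -/
open Set

/-- The ultrafilter limit set `Y_𝓕(𝒰)`. -/
def uLim {X : Type*} (𝓕 : Set (Set X)) (Y : Set X) (𝒰 : Ultrafilter Y) : Set X :=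
  {x : X | ∀ F ∈ 𝓕, x ∈ F ↔ (Subtype.val ⁻¹' F : Set Y) ∈ 𝒰}

/-- Let `A` be a commutative ring, `Y ⊆ Spec A` and `𝒰` an ultrafilter on `Y`.  Then the set
`𝔭_𝒰 = {a ∈ A : V(a) ∩ Y ∈ 𝒰}` is a prime ideal of `A`, and, with `𝓟` the collection of
principal open subsets `D_a` of `Spec A`, one has `Y_𝓟(𝒰) = {𝔭_𝒰}`. -/
theorem stmt2 {A : Type*} [CommRing A] (Y : Set (PrimeSpectrum A)) (𝒰 : Ultrafilter Y) :
    ∃ 𝔭 : PrimeSpectrum A,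
      (𝔭.asIdeal : Set A) =
        {a : A | (Subtype.val ⁻¹' {q : PrimeSpectrum A | a ∈ q.asIdeal} : Set Y) ∈ 𝒰} ∧
      uLim {F : Set (PrimeSpectrum A) | ∃ a : A, F = {q : PrimeSpectrum A | a ∉ q.asIdeal}}
        Y 𝒰 = {𝔭} := by
  set S : A → Set Y := fun a => (Subtype.val ⁻¹' {q : PrimeSpectrum A | a ∈ q.asIdeal} : Set Y)
    with hS
  have hSmem : ∀ a (y : Y), y ∈ S a ↔ a ∈ (y : PrimeSpectrum A).asIdeal := fun _ _ => Iff.rfl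
  let I : Ideal A :=
    { carrier := {a : A | S a ∈ 𝒰}
      zero_mem' := by
        have : S 0 = univ := by
          ext y; simp [hSmem]
        simp only [Set.mem_setOf_eq, this]
        exact Filter.univ_mem
      add_mem' := by
        intro a b ha hb
        have h := 𝒰.toFilter.inter_sets ha hb
        exact 𝒰.toFilter.sets_of_superset h (fun y hy =>
          (y : PrimeSpectrum A).asIdeal.add_mem hy.1 hy.2)
      smul_mem' := by
        intro c a ha
        exact 𝒰.toFilter.sets_of_superset ha (fun y hy =>
          (y : PrimeSpectrum A).asIdeal.mul_mem_left c hy) }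
  have hprime : I.IsPrime := by
    constructor
    · intro h1
      have : S 1 ∈ 𝒰 := (Ideal.eq_top_iff_one I).mp h1
      have : (∅ : Set Y) ∈ 𝒰 := by
        have he : S 1 = ∅ := by
          ext y; simp [hSmem, (y : PrimeSpectrum A).isPrime.ne_top]
          exact fun h => (y : PrimeSpectrum A).isPrime.ne_top ((Ideal.eq_top_iff_one _).mpr h)
        rwa [he] at this
      exact 𝒰.toFilter.empty_notMem this
    · intro a b hab
      have hu : S (a * b) = S a ∪ S b := by
        ext y
        simp only [hSmem, Set.mem_union]
        exact ((y : PrimeSpectrum A).isPrime.mul_mem_iff_mem_or_mem)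
      have hab' : S (a * b) ∈ 𝒰 := hab
      rw [hu] at hab'
      exact Ultrafilter.union_mem_iff.mp hab'
  refine ⟨⟨I, hprime⟩, rfl, ?_⟩
  ext x
  simp only [uLim, Set.mem_setOf_eq, Set.mem_singleton_iff]
  constructor
  · intro hx
    have key : ∀ a : A, a ∈ x.asIdeal ↔ S a ∈ 𝒰 := by
      intro a
      have h := hx {q : PrimeSpectrum A | a ∉ q.asIdeal} ⟨a, rfl⟩
      simp only [Set.mem_setOf_eq] at h
      have hc : (Subtype.val ⁻¹' {q : PrimeSpectrum A | a ∉ q.asIdeal} : Set Y) = (S a)ᶜ := by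
        ext y; simp [hSmem]
      rw [hc, Ultrafilter.compl_mem_iff_notMem] at h
      constructor
      · intro ha
        by_contra hna
        exact (h.mpr hna) ha
      · intro ha
        by_contra hna
        exact (h.mp hna) ha
    ext a
    exact key a
  · rintro rfl
    rintro F ⟨a, rfl⟩
    simp only [Set.mem_setOf_eq]
    have hc : (Subtype.val ⁻¹' {q : PrimeSpectrum A | a ∉ q.asIdeal} : Set Y) = (S a)ᶜ := by
      ext y; simp [hSmem]
    rw [hc, Ultrafilter.compl_mem_iff_notMem]
    exact Iff.rfl.not
end

section
/- Let X be a set and 𝓕 a nonempty collection of subsets of X. Then the family of all subsets of X that are 𝓕-stable under ultrafilters is the collection of closed sets for a topology on X (i.e., ∅ and X are 𝓕-stable, a union of two 𝓕-stable sets is 𝓕-stable, and an arbitrary intersection of 𝓕-stable sets is 𝓕-stable). -/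
open Set

/-- A subset `Y ⊆ X` is `𝓕`-stable under ultrafilters if `Y_𝓕(𝒰) ⊆ Y` for every
ultrafilter `𝒰` on `Y`. -/
def UStable {X : Type*} (𝓕 : Set (Set X)) (Y : Set X) : Prop :=
  ∀ 𝒰 : Ultrafilter Y, uLim 𝓕 Y 𝒰 ⊆ Y

/-- Reformulation using ultrafilters on the ambient type. -/
theorem uStable_iff {X : Type*} (𝓕 : Set (Set X)) (Y : Set X) :
    UStable 𝓕 Y ↔ ∀ 𝒲 : Ultrafilter X, Y ∈ 𝒲 →
      {x : X | ∀ F ∈ 𝓕, x ∈ F ↔ F ∈ 𝒲} ⊆ Y := by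
  constructor
  · intro h 𝒲 hY
    have large : Set.range (Subtype.val : Y → X) ∈ 𝒲 := by
      rwa [Subtype.range_val]
    set 𝒰 := 𝒲.comap Subtype.val_injective large with h𝒰
    intro x hx
    apply h 𝒰
    intro F hF
    rw [hx F hF]
    rw [Ultrafilter.mem_comap]
    have : (Subtype.val : Y → X) '' (Subtype.val ⁻¹' F) = F ∩ Y := by
      rw [Subtype.image_preimage_coe, inter_comm]
    rw [this]
    constructor
    · intro hFw; exact Filter.inter_mem hFw hY
    · intro hFi; exact Filter.mem_of_superset hFi inter_subset_left
  · intro h 𝒰 x hx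
    apply h (𝒰.map Subtype.val)
    · rw [Ultrafilter.mem_map]
      have : (Subtype.val ⁻¹' Y : Set Y) = Set.univ := by
        ext y; simp [y.2]
      rw [this]; exact Filter.univ_mem
    · intro F hF
      rw [hx F hF, Ultrafilter.mem_map]

/-- The family of all `𝓕`-stable under ultrafilters subsets of `X` is the collection of closed
sets for a topology on `X`: `∅` and `X` are `𝓕`-stable, the union of two `𝓕`-stable sets is
`𝓕`-stable, and an arbitrary intersection of `𝓕`-stable sets is `𝓕`-stable. -/
theorem stmt3 {X : Type*} (𝓕 : Set (Set X)) (h𝓕 : 𝓕.Nonempty) :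
    UStable 𝓕 (∅ : Set X) ∧ UStable 𝓕 (Set.univ : Set X) ∧
    (∀ C C₀ : Set X, UStable 𝓕 C → UStable 𝓕 C₀ → UStable 𝓕 (C ∪ C₀)) ∧
    (∀ 𝒢 : Set (Set X), (∀ C ∈ 𝒢, UStable 𝓕 C) → UStable 𝓕 (⋂₀ 𝒢)) := by
  refine ⟨?_, ?_, ?_, ?_⟩
  · rw [uStable_iff]
    intro 𝒲 hY
    exact absurd hY (Ultrafilter.empty_notMem)
  · intro 𝒰 x _; trivial
  · intro C C₀ hC hC₀
    rw [uStable_iff] at *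
    intro 𝒲 hY x hx
    rcases (Ultrafilter.union_mem_iff.mp hY) with h | h
    · exact Or.inl (hC 𝒲 h hx)
    · exact Or.inr (hC₀ 𝒲 h hx)
  · intro 𝒢 h𝒢
    rw [uStable_iff]
    intro 𝒲 hY x hx C hC
    exact (uStable_iff 𝓕 C).mp (h𝒢 C hC) 𝒲
      (Filter.mem_of_superset hY (sInter_subset_of_mem hC)) hx
end

section
/- Let X be a set and 𝓕 a nonempty collection of subsets of X. Let 𝓕_♯ be the collection of all intersections of finite subcollections of 𝓕 and 𝓕^♯ the collection of all unions of finite subcollections of 𝓕. Then the 𝓕-ultrafilter topology, the 𝓕_♯-ultrafilter topology and the 𝓕^♯-ultrafilter topology on X coincide. -/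
open Set

lemma uLim_sInter {X : Type*} (𝓕 : Set (Set X)) (Y : Set X) (𝒰 : Ultrafilter Y) :
    uLim {S : Set X | ∃ 𝒢 ⊆ 𝓕, 𝒢.Finite ∧ S = ⋂₀ 𝒢} Y 𝒰 = uLim 𝓕 Y 𝒰 := by
  ext x
  constructor
  · intro hx F hF
    exact hx F ⟨{F}, by simpa using hF, Set.finite_singleton F, by simp⟩
  · rintro hx S ⟨𝒢, h𝒢, hfin, rfl⟩
    calc x ∈ ⋂₀ 𝒢 ↔ ∀ F ∈ 𝒢, x ∈ F := Set.mem_sInter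
      _ ↔ ∀ F ∈ 𝒢, (Subtype.val ⁻¹' F : Set Y) ∈ 𝒰 :=
          forall₂_congr fun F hF => hx F (h𝒢 hF)
      _ ↔ (⋂ F ∈ 𝒢, (Subtype.val ⁻¹' F : Set Y)) ∈ 𝒰 := (Filter.biInter_mem hfin).symm
      _ ↔ (Subtype.val ⁻¹' ⋂₀ 𝒢 : Set Y) ∈ 𝒰 := by rw [Set.preimage_sInter]

lemma uLim_sUnion {X : Type*} (𝓕 : Set (Set X)) (Y : Set X) (𝒰 : Ultrafilter Y) :
    uLim {S : Set X | ∃ 𝒢 ⊆ 𝓕, 𝒢.Finite ∧ S = ⋃₀ 𝒢} Y 𝒰 = uLim 𝓕 Y 𝒰 := by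
  ext x
  constructor
  · intro hx F hF
    exact hx F ⟨{F}, by simpa using hF, Set.finite_singleton F, by simp⟩
  · rintro hx S ⟨𝒢, h𝒢, hfin, rfl⟩
    calc x ∈ ⋃₀ 𝒢 ↔ ∃ F ∈ 𝒢, x ∈ F := Set.mem_sUnion
      _ ↔ ∃ F ∈ 𝒢, (Subtype.val ⁻¹' F : Set Y) ∈ 𝒰 :=
          exists_congr fun F => and_congr_right fun hF => hx F (h𝒢 hF)
      _ ↔ (⋃ F ∈ 𝒢, (Subtype.val ⁻¹' F : Set Y)) ∈ 𝒰 :=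
          (Ultrafilter.finite_biUnion_mem_iff hfin).symm
      _ ↔ (Subtype.val ⁻¹' ⋃₀ 𝒢 : Set Y) ∈ 𝒰 := by rw [Set.preimage_sUnion]

/-- Let `𝓕` be a nonempty collection of subsets of `X`, let `𝓕_♯` be the collection of
intersections of finite subcollections of `𝓕` and `𝓕^♯` the collection of unions of finite
subcollections of `𝓕`.  Then the `𝓕`-, `𝓕_♯`- and `𝓕^♯`-ultrafilter topologies (the topologies
whose closed sets are exactly the stable sets for the respective collections) coincide. -/
theorem stmt4 {X : Type*} (𝓕 : Set (Set X)) (h𝓕 : 𝓕.Nonempty)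
    (t t₁ t₂ : TopologicalSpace X)
    (ht : ∀ C : Set X, @IsClosed X t C ↔ UStable 𝓕 C)
    (ht₁ : ∀ C : Set X,
      @IsClosed X t₁ C ↔ UStable {S : Set X | ∃ 𝒢 ⊆ 𝓕, 𝒢.Finite ∧ S = ⋂₀ 𝒢} C)
    (ht₂ : ∀ C : Set X,
      @IsClosed X t₂ C ↔ UStable {S : Set X | ∃ 𝒢 ⊆ 𝓕, 𝒢.Finite ∧ S = ⋃₀ 𝒢} C) :
    t = t₁ ∧ t = t₂ := by
  have key : ∀ s : TopologicalSpace X,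
      (∀ C : Set X, @IsClosed X t C ↔ @IsClosed X s C) → t = s := by
    intro s h
    exact TopologicalSpace.ext_isClosed h
  constructor
  · refine key t₁ fun C => ?_
    rw [ht, ht₁]
    unfold UStable
    simp_rw [uLim_sInter]
  · refine key t₂ fun C => ?_
    rw [ht, ht₂]
    unfold UStable
    simp_rw [uLim_sUnion]
end

section
/- Let X be a set, 𝓕 a nonempty collection of subsets of X, and Bool(𝓕) the Boolean subalgebra of the power set of X generated by 𝓕 (i.e., the smallest collection of subsets of X containing 𝓕 and closed under finite unions, finite intersections and complements). Then the 𝓕-ultrafilter topology and the Bool(𝓕)-ultrafilter topology on X are the same. -/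
open Set

/-- Membership in the Boolean subalgebra `Bool(𝓕)` of the power set of `X` generated by `𝓕`:
the smallest collection of subsets of `X` containing `𝓕` and closed under finite unions,
finite intersections and complements. -/
inductive BoolGen {X : Type*} (𝓕 : Set (Set X)) : Set X → Prop
  | base : ∀ F ∈ 𝓕, BoolGen 𝓕 F
  | compl : ∀ S : Set X, BoolGen 𝓕 S → BoolGen 𝓕 Sᶜ
  | union : ∀ S T : Set X, BoolGen 𝓕 S → BoolGen 𝓕 T → BoolGen 𝓕 (S ∪ T)
  | inter : ∀ S T : Set X, BoolGen 𝓕 S → BoolGen 𝓕 T → BoolGen 𝓕 (S ∩ T)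

lemma uLim_boolGen {X : Type*} (𝓕 : Set (Set X)) (Y : Set X) (𝒰 : Ultrafilter Y) :
    uLim {S : Set X | BoolGen 𝓕 S} Y 𝒰 = uLim 𝓕 Y 𝒰 := by
  ext x
  constructor
  · intro hx F hF
    exact hx F (BoolGen.base F hF)
  · intro hx F hF
    induction hF with
    | base F hF => exact hx F hF
    | compl S _ ih =>
      simp only [Set.preimage_compl, Ultrafilter.compl_mem_iff_notMem,
        Set.mem_compl_iff]
      exact not_congr ih
    | union S T _ _ ihS ihT =>
      simp only [Set.preimage_union, Ultrafilter.union_mem_iff, Set.mem_union]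
      exact or_congr ihS ihT
    | inter S T _ _ ihS ihT =>
      simp only [Set.preimage_inter, Set.mem_inter_iff]
      constructor
      · rintro ⟨hS, hT⟩
        exact Filter.inter_mem (ihS.mp hS) (ihT.mp hT)
      · intro h
        exact ⟨ihS.mpr (𝒰.toFilter.mem_of_superset h Set.inter_subset_left),
          ihT.mpr (𝒰.toFilter.mem_of_superset h Set.inter_subset_right)⟩

/-- The `𝓕`-ultrafilter topology and the `Bool(𝓕)`-ultrafilter topology on `X` coincide,
where `Bool(𝓕)` is the Boolean subalgebra of the power set of `X` generated by `𝓕`. -/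
theorem stmt5 {X : Type*} (𝓕 : Set (Set X)) (h𝓕 : 𝓕.Nonempty)
    (t t' : TopologicalSpace X)
    (ht : ∀ C : Set X, @IsClosed X t C ↔ UStable 𝓕 C)
    (ht' : ∀ C : Set X, @IsClosed X t' C ↔ UStable {S : Set X | BoolGen 𝓕 S} C) :
    t = t' := by
  refine TopologicalSpace.ext_isClosed fun s => ?_
  rw [ht, ht']
  unfold UStable
  simp_rw [uLim_boolGen]
end

section
/- Let X be a set and 𝓕 a nonempty collection of subsets of X. Then every member of the Boolean subalgebra of the power set of X generated by 𝓕 is a clopen subset of X in the 𝓕-ultrafilter topology; in particular every F ∈ 𝓕 is clopen in the 𝓕-ultrafilter topology. -/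
open Set

/-- Every member of the Boolean subalgebra of the power set of `X` generated by `𝓕` is clopen
in the `𝓕`-ultrafilter topology; in particular every `F ∈ 𝓕` is clopen there. -/
theorem stmt6 {X : Type*} (𝓕 : Set (Set X)) (h𝓕 : 𝓕.Nonempty)
    (t : TopologicalSpace X)
    (ht : ∀ C : Set X, @IsClosed X t C ↔ UStable 𝓕 C) :
    (∀ S : Set X, BoolGen 𝓕 S → @IsClopen X t S) ∧ ∀ F ∈ 𝓕, @IsClopen X t F := by
  have key : ∀ S : Set X, BoolGen 𝓕 S → ∀ (Y : Set X) (𝒰 : Ultrafilter Y) (x : X),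
      x ∈ uLim 𝓕 Y 𝒰 → (x ∈ S ↔ (Subtype.val ⁻¹' S : Set Y) ∈ 𝒰) := by
    intro S hS
    induction hS with
    | base F hF => intro Y 𝒰 x hx; exact hx F hF
    | compl S _ ih =>
        intro Y 𝒰 x hx
        rw [Set.preimage_compl, Ultrafilter.compl_mem_iff_notMem]
        simp [mem_compl_iff, ih Y 𝒰 x hx]
    | union S T _ _ ihS ihT =>
        intro Y 𝒰 x hx
        rw [Set.preimage_union, Ultrafilter.union_mem_iff]
        simp [mem_union, ihS Y 𝒰 x hx, ihT Y 𝒰 x hx]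
    | inter S T _ _ ihS ihT =>
        intro Y 𝒰 x hx
        simp [Set.preimage_inter, ← Ultrafilter.mem_coe, Filter.inter_mem_iff, mem_inter_iff, ihS Y 𝒰 x hx, ihT Y 𝒰 x hx]
  have main : ∀ S : Set X, BoolGen 𝓕 S → @IsClopen X t S := by
    intro S hS
    constructor
    ·
      rw [ht]
      intro 𝒰 x hx
      have := (key S hS S 𝒰 x hx).mpr
      apply this
      have : (Subtype.val ⁻¹' S : Set S) = Set.univ := by
        ext y; simp [y.2]
      rw [this]; exact Filter.univ_mem
    · rw [← isClosed_compl_iff, ht]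
      intro 𝒰 x hx
      by_contra hxS
      rw [notMem_compl_iff] at hxS
      have h1 := (key S hS Sᶜ 𝒰 x hx).mp hxS
      have h2 : (Subtype.val ⁻¹' S : Set (Sᶜ : Set X)) = ∅ := by
        ext y; simpa using y.2
      rw [h2] at h1
      exact 𝒰.empty_notMem h1
  exact ⟨main, fun F hF => main F (BoolGen.base F hF)⟩
end

section
/- Let X be a set and 𝓕 a nonempty collection of subsets of X such that for every pair of distinct points x, y ∈ X there exists F ∈ 𝓕 with x ∈ F and y ∉ F. Then X with the 𝓕-ultrafilter topology is a Hausdorff and totally disconnected space, and for every subset Y ⊆ X and every ultrafilter 𝒰 on Y the set Y_𝓕(𝒰) has at most one element. -/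
open Set

/-- If for every pair of distinct points `x, y ∈ X` there is `F ∈ 𝓕` with `x ∈ F` and `y ∉ F`,
then the `𝓕`-ultrafilter topology is Hausdorff and totally disconnected, and `Y_𝓕(𝒰)` has at
most one element for every `Y ⊆ X` and every ultrafilter `𝒰` on `Y`. -/
theorem stmt7 {X : Type*} (𝓕 : Set (Set X)) (h𝓕 : 𝓕.Nonempty)
    (hsep : ∀ x y : X, x ≠ y → ∃ F ∈ 𝓕, x ∈ F ∧ y ∉ F)
    (t : TopologicalSpace X)
    (ht : ∀ C : Set X, @IsClosed X t C ↔ UStable 𝓕 C) :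
    @T2Space X t ∧ @TotallyDisconnectedSpace X t ∧
      ∀ (Y : Set X) (𝒰 : Ultrafilter Y), (uLim 𝓕 Y 𝒰).Subsingleton := by
  letI := t
  have hclosed : ∀ F ∈ 𝓕, IsClosed F := by
    intro F hF
    rw [ht]
    intro 𝒰 x hx
    have h := (hx F hF).2
    apply h
    have : (Subtype.val ⁻¹' F : Set F) = Set.univ := by
      ext y; simp [y.2]
    rw [this]
    exact Filter.univ_mem
  have hcoclosed : ∀ F ∈ 𝓕, IsClosed Fᶜ := by
    intro F hF
    rw [ht]
    intro 𝒰 x hx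
    intro hxF
    have h := (hx F hF).1 hxF
    have : (Subtype.val ⁻¹' F : Set (Fᶜ : Set X)) = ∅ := by
      ext y; simpa using y.2
    rw [this] at h
    exact 𝒰.empty_notMem h
  have hts : TotallySeparatedSpace X := by
    constructor
    intro x _ y _ hxy
    obtain ⟨F, hF, hxF, hyF⟩ := hsep x y hxy
    exact ⟨F, Fᶜ, (by simpa using (hcoclosed F hF).isOpen_compl : IsOpen F), (hclosed F hF).isOpen_compl,
      hxF, hyF, by intro z _; exact (em (z ∈ F)).imp id id,
      disjoint_compl_right⟩
  refine ⟨inferInstance, inferInstance, ?_⟩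
  intro Y 𝒰 x hx y hy
  by_contra hxy
  obtain ⟨F, hF, hxF, hyF⟩ := hsep x y hxy
  exact hyF ((hy F hF).2 ((hx F hF).1 hxF))
end

section
/- Let X be a set, 𝓕 a nonempty collection of subsets of X, Y a nonempty subset of X, and 𝒰 an ultrafilter on Y. Then for every topology on X in which every member of 𝓕 is clopen, the set Y_𝓕(𝒰) is closed. In particular, Y_𝓕(𝒰) is closed in the 𝓕-ultrafilter topology. -/
open Set

/-- Let `Y` be a nonempty subset of `X` and `𝒰` an ultrafilter on `Y`.  Then `Y_𝓕(𝒰)` is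
closed in every topology on `X` in which every member of `𝓕` is clopen; in particular
`Y_𝓕(𝒰)` is closed in the `𝓕`-ultrafilter topology. -/
theorem stmt8 {X : Type*} (𝓕 : Set (Set X)) (h𝓕 : 𝓕.Nonempty)
    (Y : Set X) (hY : Y.Nonempty) (𝒰 : Ultrafilter Y) :
    (∀ t : TopologicalSpace X, (∀ F ∈ 𝓕, @IsClopen X t F) →
      @IsClosed X t (uLim 𝓕 Y 𝒰)) ∧
    ∀ t : TopologicalSpace X, (∀ C : Set X, @IsClosed X t C ↔ UStable 𝓕 C) →
      @IsClosed X t (uLim 𝓕 Y 𝒰) := by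
  classical
  constructor
  · intro t ht
    have heq : uLim 𝓕 Y 𝒰 =
        ⋂ F ∈ 𝓕, (if (Subtype.val ⁻¹' F : Set Y) ∈ 𝒰 then F else Fᶜ) := by
      ext x
      simp only [uLim, mem_setOf_eq, mem_iInter]
      constructor
      · intro hx F hF
        by_cases h : (Subtype.val ⁻¹' F : Set Y) ∈ 𝒰
        · simpa [h] using (hx F hF).mpr h
        · simp only [h, if_false, mem_compl_iff]
          exact fun hxF => h ((hx F hF).mp hxF)
      · intro hx F hF
        have := hx F hF
        by_cases h : (Subtype.val ⁻¹' F : Set Y) ∈ 𝒰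
        · simp only [h, if_true] at this; exact ⟨fun _ => h, fun _ => this⟩
        · simp only [h, if_false, mem_compl_iff] at this
          exact ⟨fun hxF => absurd hxF this, fun h' => absurd h' h⟩
    rw [heq]
    refine isClosed_biInter fun F hF => ?_
    by_cases h : (Subtype.val ⁻¹' F : Set Y) ∈ 𝒰
    · simpa [h] using (ht F hF).isClosed
    · simpa [h] using (ht F hF).isOpen.isClosed_compl
  · intro t ht
    refine (ht _).2 fun 𝒱 x hx F hF => ?_
    have key : (Subtype.val ⁻¹' F : Set (uLim 𝓕 Y 𝒰)) ∈ 𝒱 ↔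
        (Subtype.val ⁻¹' F : Set Y) ∈ 𝒰 := by
      by_cases h : (Subtype.val ⁻¹' F : Set Y) ∈ 𝒰
      · have : (Subtype.val ⁻¹' F : Set (uLim 𝓕 Y 𝒰)) = univ := by
          ext z; simp only [mem_preimage, mem_univ, iff_true]
          exact (z.2 F hF).mpr h
        simp only [this, h, iff_true]; exact Filter.univ_mem
      · have : (Subtype.val ⁻¹' F : Set (uLim 𝓕 Y 𝒰)) = ∅ := by
          ext z; simp only [mem_preimage, mem_empty_iff_false, iff_false]
          exact fun hz => h ((z.2 F hF).mp hz)
        simp only [this, h, iff_false]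
        exact Ultrafilter.empty_notMem
    exact (hx F hF).trans key
end

section
/- Let X be a set and 𝓕 a nonempty collection of subsets of X. Then for every subset Y of X, the closure of Y in the 𝓕-ultrafilter topology equals the union of the sets Y_𝓕(𝒰) as 𝒰 ranges over all ultrafilters on Y. -/
open Set

/-- For every subset `Y` of `X`, the closure of `Y` in the `𝓕`-ultrafilter topology is the
union of the sets `Y_𝓕(𝒰)`, where `𝒰` ranges over all ultrafilters on `Y`. -/
theorem stmt9 {X : Type*} (𝓕 : Set (Set X)) (h𝓕 : 𝓕.Nonempty)
    (t : TopologicalSpace X)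
    (ht : ∀ C : Set X, @IsClosed X t C ↔ UStable 𝓕 C) (Y : Set X) :
    @closure X t Y = ⋃ 𝒰 : Ultrafilter Y, uLim 𝓕 Y 𝒰 := by
  letI := t
  set Z := ⋃ 𝒰 : Ultrafilter Y, uLim 𝓕 Y 𝒰 with hZ
  apply subset_antisymm
  · -- closure Y ⊆ Z, since Z is closed and contains Y
    have hYZ : Y ⊆ Z := by
      intro y hy
      refine mem_iUnion.2 ⟨(pure ⟨y, hy⟩ : Ultrafilter Y), fun F hF => ?_⟩
      simp
    have hZclosed : IsClosed Z := by
      rw [ht]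
      intro 𝒱 x hx
      have hchoice : ∀ z : Z, ∃ 𝒰 : Ultrafilter Y, (z : X) ∈ uLim 𝓕 Y 𝒰 := fun z =>
        mem_iUnion.1 z.2
      choose u hu using hchoice
      refine mem_iUnion.2 ⟨𝒱.bind u, fun F hF => ?_⟩
      have hmem : (Subtype.val ⁻¹' F : Set Y) ∈ 𝒱.bind u ↔
          {z : Z | (Subtype.val ⁻¹' F : Set Y) ∈ u z} ∈ 𝒱 := Iff.rfl
      rw [hmem]
      have h1 : {z : Z | (Subtype.val ⁻¹' F : Set Y) ∈ u z} = (Subtype.val ⁻¹' F : Set Z) := by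
        ext z
        exact ((hu z F hF)).symm
      rw [h1]
      exact hx F hF
    exact closure_minimal hYZ hZclosed
  · -- Z ⊆ closure Y
    intro x hx
    obtain ⟨𝒰, hx⟩ := mem_iUnion.1 hx
    have hC : UStable 𝓕 (closure Y) := (ht _).1 isClosed_closure
    have hincl : Y ⊆ closure Y := subset_closure
    set ι : Y → (closure Y : Set X) := fun y => ⟨y.1, hincl y.2⟩ with hι
    refine hC (𝒰.map ι) ?_
    intro F hF
    rw [hx F hF]
    exact Iff.rfl
end

section
/- Let X be a set and 𝓕 a nonempty collection of subsets of X. The following are equivalent: (i) X with the 𝓕-ultrafilter topology is compact (every open cover has a finite subcover); (ii) X_𝓕(𝒰) ≠ ∅ for every ultrafilter 𝒰 on X; (iii) every subcollection 𝓗 of 𝓕 ∪ {X \ F : F ∈ 𝓕} with the finite intersection property has nonempty total intersection. -/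
open Set

/-- The ultrafilter limit set `X_𝓕(𝒰)` for an ultrafilter `𝒰` on the whole set `X`
(note that `F ∩ X = F`). -/
def uLimTop {X : Type*} (𝓕 : Set (Set X)) (𝒰 : Ultrafilter X) : Set X :=
  {x : X | ∀ F ∈ 𝓕, x ∈ F ↔ F ∈ 𝒰}

/-- Key lemma: a limit point lies in every closed set belonging to the ultrafilter. -/
lemma key_mem {X : Type*} (𝓕 : Set (Set X)) (t : TopologicalSpace X)
    (ht : ∀ C : Set X, @IsClosed X t C ↔ UStable 𝓕 C)
    (𝒰 : Ultrafilter X) {x : X} (hx : x ∈ uLimTop 𝓕 𝒰)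
    {C : Set X} (hC : @IsClosed X t C) (hCU : C ∈ 𝒰) : x ∈ C := by
  have large : Set.range (Subtype.val : C → X) ∈ 𝒰 := by
    rwa [Subtype.range_val]
  set 𝒱 := 𝒰.comap Subtype.val_injective large with h𝒱
  refine (ht C).mp hC 𝒱 ?_
  intro F hF
  rw [h𝒱, Ultrafilter.mem_comap]
  have himg : (Subtype.val : C → X) '' (Subtype.val ⁻¹' F) = F ∩ C := by
    rw [Subtype.image_preimage_coe, inter_comm]
  rw [himg]
  constructor
  · intro hxF
    exact Filter.inter_mem ((hx F hF).mp hxF) hCU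
  · intro hFC
    exact (hx F hF).mpr (𝒰.toFilter.mem_of_superset hFC inter_subset_left)

/-- The following are equivalent: (i) the `𝓕`-ultrafilter topology on `X` is compact;
(ii) `X_𝓕(𝒰) ≠ ∅` for every ultrafilter `𝒰` on `X`; (iii) every subcollection `𝓗` of
`𝓕 ∪ {X \ F : F ∈ 𝓕}` with the finite intersection property has nonempty intersection. -/
theorem stmt10 {X : Type*} (𝓕 : Set (Set X)) (h𝓕 : 𝓕.Nonempty)
    (t : TopologicalSpace X)
    (ht : ∀ C : Set X, @IsClosed X t C ↔ UStable 𝓕 C) :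
    (@CompactSpace X t ↔ ∀ 𝒰 : Ultrafilter X, (uLimTop 𝓕 𝒰).Nonempty) ∧
    ((∀ 𝒰 : Ultrafilter X, (uLimTop 𝓕 𝒰).Nonempty) ↔
      ∀ 𝓗 ⊆ 𝓕 ∪ (compl '' 𝓕),
        (∀ 𝒢 ⊆ 𝓗, 𝒢.Finite → (⋂₀ 𝒢).Nonempty) → (⋂₀ 𝓗).Nonempty) := by
  -- F ∈ 𝓕 is closed
  have hFclosed : ∀ F ∈ 𝓕, @IsClosed X t F := by
    intro F hF
    rw [ht]
    intro 𝒱 x hx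
    have := (hx F hF).mpr
    apply this
    have : (Subtype.val ⁻¹' F : Set F) = univ := by
      ext y; simp [y.2]
    rw [this]
    exact Filter.univ_mem
  -- Fᶜ is closed for F ∈ 𝓕
  have hFcclosed : ∀ F ∈ 𝓕, @IsClosed X t Fᶜ := by
    intro F hF
    rw [ht]
    intro 𝒱 x hx
    intro hxF
    have hmem := (hx F hF).mp hxF
    have : (Subtype.val ⁻¹' F : Set ↥(Fᶜ)) = ∅ := by
      ext y; simp [y.2]
    rw [this] at hmem
    exact 𝒱.empty_notMem hmem
  constructor
  · -- (i) ↔ (ii)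
    rw [← isCompact_univ_iff, isCompact_iff_ultrafilter_le_nhds]
    constructor
    · intro h 𝒰
      obtain ⟨x, -, hx⟩ := h 𝒰 (by simp)
      refine ⟨x, ?_⟩
      intro F hF
      have hcl : ClusterPt x (𝒰 : Filter X) := Ultrafilter.clusterPt_iff.mpr hx
      rw [clusterPt_iff_forall_mem_closure] at hcl
      constructor
      · intro hxF
        by_contra hFU
        have hFc : Fᶜ ∈ 𝒰 := (Ultrafilter.compl_mem_iff_notMem).mpr hFU
        have := hcl Fᶜ hFc
        rw [(hFcclosed F hF).closure_eq] at this
        exact this hxF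
      · intro hFU
        have := hcl F hFU
        rwa [(hFclosed F hF).closure_eq] at this
    · intro h
      intro 𝒰 _
      obtain ⟨x, hx⟩ := h 𝒰
      refine ⟨x, mem_univ x, Ultrafilter.clusterPt_iff.mp ?_⟩
      rw [clusterPt_iff_forall_mem_closure]
      intro s hs
      have hcl : closure s ∈ 𝒰 :=
        𝒰.toFilter.mem_of_superset hs subset_closure
      exact key_mem 𝓕 t ht 𝒰 hx isClosed_closure hcl
  · -- (ii) ↔ (iii)
    constructor
    · intro h 𝓗 h𝓗 hFIP
      -- build a filter containing 𝓗 and extend to ultrafilter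
      have hfb : (Filter.generate 𝓗).NeBot := by
        rw [Filter.generate_neBot_iff]
        intro 𝒢 h𝒢 h𝒢fin
        exact hFIP 𝒢 h𝒢 h𝒢fin
      obtain ⟨𝒰, h𝒰⟩ := Filter.exists_ultrafilter_le (Filter.generate 𝓗)
      obtain ⟨x, hx⟩ := h 𝒰
      refine ⟨x, ?_⟩
      intro H hH
      have hHU : H ∈ 𝒰 := h𝒰 (Filter.mem_generate_of_mem hH)
      rcases h𝓗 hH with hHF | ⟨F, hF, rfl⟩
      · exact (hx H hHF).mpr hHU
      · intro hxF
        exact (Ultrafilter.compl_mem_iff_notMem.mp hHU) ((hx F hF).mp hxF)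
    · intro h 𝒰
      set 𝓗 : Set (Set X) := {F | F ∈ 𝓕 ∧ F ∈ 𝒰} ∪ {G | ∃ F ∈ 𝓕, F ∉ 𝒰 ∧ G = Fᶜ} with h𝓗def
      have h𝓗sub : 𝓗 ⊆ 𝓕 ∪ (compl '' 𝓕) := by
        rintro G (⟨hG, _⟩ | ⟨F, hF, _, rfl⟩)
        · exact Or.inl hG
        · exact Or.inr ⟨F, hF, rfl⟩
      have h𝓗U : ∀ G ∈ 𝓗, G ∈ 𝒰 := by
        rintro G (⟨_, hG⟩ | ⟨F, _, hFU, rfl⟩)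
        · exact hG
        · exact (Ultrafilter.compl_mem_iff_notMem).mpr hFU
      have hFIP : ∀ 𝒢 ⊆ 𝓗, 𝒢.Finite → (⋂₀ 𝒢).Nonempty := by
        intro 𝒢 h𝒢 h𝒢fin
        have : ⋂₀ 𝒢 ∈ (𝒰 : Filter X) := by
          rw [Filter.sInter_mem h𝒢fin]
          exact fun G hG => h𝓗U G (h𝒢 hG)
        exact 𝒰.nonempty_of_mem this
      obtain ⟨x, hx⟩ := h 𝓗 h𝓗sub hFIP
      refine ⟨x, ?_⟩
      intro F hF
      constructor
      · intro hxF
        by_contra hFU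
        have : Fᶜ ∈ 𝓗 := Or.inr ⟨F, hF, hFU, rfl⟩
        exact hx Fᶜ this hxF
      · intro hFU
        exact hx F (Or.inl ⟨hF, hFU⟩)
end

section
/- Let X be a set and 𝓕 a nonempty collection of subsets of X such that for every pair of distinct points x, y ∈ X there exists F ∈ 𝓕 with x ∈ F and y ∉ F. If X with the 𝓕-ultrafilter topology is compact, then the 𝓕-ultrafilter topology is the coarsest topology on X for which every member of 𝓕 is a clopen set. -/
open Set

/-- Suppose that for every pair of distinct points `x, y ∈ X` there exists `F ∈ 𝓕` with
`x ∈ F` and `y ∉ F`.  If the `𝓕`-ultrafilter topology `t` on `X` is compact, then it is the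
coarsest topology on `X` in which every member of `𝓕` is clopen (recall that in Mathlib's
order on topologies, `t' ≤ t` means that `t` is coarser than `t'`). -/
theorem stmt11 {X : Type*} (𝓕 : Set (Set X)) (h𝓕 : 𝓕.Nonempty)
    (hsep : ∀ x y : X, x ≠ y → ∃ F ∈ 𝓕, x ∈ F ∧ y ∉ F)
    (t : TopologicalSpace X)
    (ht : ∀ C : Set X, @IsClosed X t C ↔ UStable 𝓕 C)
    (hcomp : @CompactSpace X t) :
    (∀ F ∈ 𝓕, @IsClopen X t F) ∧
      ∀ t' : TopologicalSpace X, (∀ F ∈ 𝓕, @IsClopen X t' F) → t' ≤ t := by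
  have hF_closed : ∀ F ∈ 𝓕, @IsClosed X t F := by
    intro F hF
    rw [ht]
    intro 𝒰 x hx
    apply (hx F hF).mpr
    have h1 : (Subtype.val ⁻¹' F : Set F) = univ := by
      ext y; simp [y.2]
    rw [h1]; exact Filter.univ_mem
  have hFc_closed : ∀ F ∈ 𝓕, @IsClosed X t Fᶜ := by
    intro F hF
    rw [ht]
    intro 𝒰 x hx
    by_contra hxF
    simp only [mem_compl_iff, not_not] at hxF
    have h := (hx F hF).mp hxF
    have h1 : (Subtype.val ⁻¹' F : Set ↥Fᶜ) = ∅ := by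
      ext y; simpa using y.2
    rw [h1] at h
    exact 𝒰.empty_notMem h
  have hclop : ∀ F ∈ 𝓕, @IsClopen X t F := fun F hF =>
    ⟨hF_closed F hF, (@isClosed_compl_iff X t F).mp (hFc_closed F hF)⟩
  refine ⟨hclop, ?_⟩
  set S : Set (Set X) := 𝓕 ∪ compl '' 𝓕 with hS
  set t₀ := TopologicalSpace.generateFrom S with ht₀def
  have hSopen : ∀ s ∈ S, @IsOpen X t s := by
    rintro s (hs | ⟨F, hF, rfl⟩)
    · exact (hclop s hs).2
    · exact (hclop F hF).1.isOpen_compl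
  have hle : t ≤ t₀ := le_generateFrom hSopen
  have hT2 : @T2Space X t₀ := by
    refine @T2Space.mk X t₀ ?_
    intro x y hxy
    obtain ⟨F, hF, hxF, hyF⟩ := hsep x y hxy
    exact ⟨F, Fᶜ, TopologicalSpace.isOpen_generateFrom_of_mem (Or.inl hF),
      TopologicalSpace.isOpen_generateFrom_of_mem (Or.inr ⟨F, hF, rfl⟩),
      hxF, hyF, disjoint_compl_right⟩
  have hcont : @Continuous X X t t₀ id := continuous_id_iff_le.mpr hle
  have ht₀t : t₀ ≤ t := by
    rw [← isOpen_implies_isOpen_iff]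
    intro U hU
    rw [← @isClosed_compl_iff X t₀]
    have hCcl : @IsClosed X t Uᶜ := @isClosed_compl_iff X t U |>.mpr hU
    have hcpt : @IsCompact X t Uᶜ := @IsClosed.isCompact X t _ hcomp hCcl
    have hcpt0 : @IsCompact X t₀ Uᶜ := by
      have := @IsCompact.image X X t t₀ _ id hcpt hcont
      simpa using this
    exact @IsCompact.isClosed X t₀ hT2 _ hcpt0
  intro t' ht'
  have ht'S : ∀ s ∈ S, @IsOpen X t' s := by
    rintro s (hs | ⟨F, hF, rfl⟩)
    · exact (ht' s hs).2
    · exact (ht' F hF).1.isOpen_compl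
  exact le_trans (le_generateFrom ht'S) ht₀t
end

section
/- Let A be a commutative ring with identity and let 𝓟 := {D_a : a ∈ A} be the collection of principal open subsets of X := Spec(A). Then the 𝓟-ultrafilter topology on X equals the constructible topology on X, i.e., the coarsest topology on X for which every principal open subset D_a is a clopen set. -/
open Set

lemma key {A : Type*} [CommRing A] (t' : TopologicalSpace (PrimeSpectrum A))
    (h' : ∀ a : A, @IsClopen _ t' {q : PrimeSpectrum A | a ∉ q.asIdeal})
    (C : Set (PrimeSpectrum A))
    (hC : UStable {F | ∃ a : A, F = {q : PrimeSpectrum A | a ∉ q.asIdeal}} C) :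
    @IsClosed _ t' C := by
  classical
  letI := t'
  rw [← closure_subset_iff_isClosed]
  intro x hx
  have hCne : C.Nonempty := by
    rcases C.eq_empty_or_nonempty with h | h
    · rw [h, closure_empty] at hx; exact absurd hx (notMem_empty x)
    · exact h
  set D : A → Set (PrimeSpectrum A) := fun a => {q | a ∉ q.asIdeal} with hD
  set S : A → Set C := fun a =>
    if x ∈ D a then Subtype.val ⁻¹' D a else (Subtype.val ⁻¹' D a)ᶜ with hS
  have hgen : (Filter.generate (Set.range S)).NeBot := by
    rw [Filter.generate_neBot_iff]
    intro T hT hTfin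
    -- T ⊆ range S, finite; pick a finite index set
    have hNA : Nonempty A := ⟨0⟩
    set f : Set C → A := fun s => Classical.epsilon (fun a => S a = s) with hf
    have hfspec : ∀ s ∈ T, S (f s) = s := fun s hs => Classical.epsilon_spec (hT hs)
    set T' : Finset A := hTfin.toFinset.image f with hT'
    have hU : IsOpen (⋂ a ∈ T', (if x ∈ D a then D a else (D a)ᶜ)) := by
      refine isOpen_biInter_finset fun a _ => ?_
      split_ifs
      · exact (h' a).2
      · exact (h' a).1.isOpen_compl
    have hxU : x ∈ ⋂ a ∈ T', (if x ∈ D a then D a else (D a)ᶜ) := by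
      refine mem_iInter₂.2 fun a _ => ?_
      split_ifs with h
      · exact h
      · exact h
    obtain ⟨y, hyU, hyC⟩ := mem_closure_iff.1 hx _ hU hxU
    refine ⟨⟨y, hyC⟩, ?_⟩
    refine mem_sInter.2 fun s hs => ?_
    have haT' : f s ∈ T' := Finset.mem_image_of_mem f (hTfin.mem_toFinset.2 hs)
    have hy := mem_iInter₂.1 hyU (f s) haT'
    rw [← hfspec s hs]
    simp only [hS]
    split_ifs at hy ⊢ with h
    · exact hy
    · exact hy
  let 𝒰 : Ultrafilter C := @Ultrafilter.of _ _ hgen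
  have hle : (𝒰 : Filter C) ≤ Filter.generate (Set.range S) := Ultrafilter.of_le _
  have hSmem : ∀ a, S a ∈ 𝒰 := fun a =>
    hle (Filter.mem_generate_of_mem ⟨a, rfl⟩)
  have : x ∈ uLim {F | ∃ a : A, F = {q : PrimeSpectrum A | a ∉ q.asIdeal}} C 𝒰 := by
    rintro F ⟨a, rfl⟩
    have := hSmem a
    by_cases h : x ∈ D a
    · simp only [hS, if_pos h] at this
      exact ⟨fun _ => this, fun _ => h⟩
    · simp only [hS, if_neg h] at this
      have hnot : ¬ (Subtype.val ⁻¹' D a : Set C) ∈ 𝒰 :=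
        (Ultrafilter.compl_mem_iff_notMem.1 this)
      exact ⟨fun hxa => absurd hxa h, fun hm => absurd hm hnot⟩
  exact hC 𝒰 this

/-- Let `A` be a commutative ring and `𝓟 = {D_a : a ∈ A}` the collection of principal open
subsets of `Spec A`.  Then the `𝓟`-ultrafilter topology `t` on `Spec A` equals the
constructible topology, i.e. the coarsest topology in which every `D_a` is clopen (in
Mathlib's order on topologies, `t' ≤ t` means that `t` is coarser than `t'`). -/
theorem stmt12 {A : Type*} [CommRing A]
    (t : TopologicalSpace (PrimeSpectrum A))
    (ht : ∀ C : Set (PrimeSpectrum A),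
      @IsClosed (PrimeSpectrum A) t C ↔
        UStable {F : Set (PrimeSpectrum A) | ∃ a : A, F = {q : PrimeSpectrum A | a ∉ q.asIdeal}} C) :
    (∀ a : A, @IsClopen (PrimeSpectrum A) t {q : PrimeSpectrum A | a ∉ q.asIdeal}) ∧
      ∀ t' : TopologicalSpace (PrimeSpectrum A),
        (∀ a : A, @IsClopen (PrimeSpectrum A) t' {q : PrimeSpectrum A | a ∉ q.asIdeal}) →
          t' ≤ t := by
  constructor
  · intro a
    letI := t
    have hclosed : IsClosed {q : PrimeSpectrum A | a ∉ q.asIdeal} := by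
      rw [ht]
      intro 𝒰 x hx
      have h := hx _ ⟨a, rfl⟩
      refine h.2 ?_
      have : (Subtype.val ⁻¹' {q : PrimeSpectrum A | a ∉ q.asIdeal} :
          Set {q : PrimeSpectrum A | a ∉ q.asIdeal}) = univ := by
        ext y
        simp only [mem_preimage, mem_univ, iff_true]
        exact y.2
      rw [this]
      exact Filter.univ_mem
    have hcclosed : IsClosed {q : PrimeSpectrum A | a ∉ q.asIdeal}ᶜ := by
      rw [ht]
      intro 𝒰 x hx
      have h := hx _ ⟨a, rfl⟩
      intro hxD
      have : (Subtype.val ⁻¹' {q : PrimeSpectrum A | a ∉ q.asIdeal} :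
          Set (↥({q : PrimeSpectrum A | a ∉ q.asIdeal}ᶜ))) = ∅ := by
        ext y
        simp only [mem_preimage, mem_empty_iff_false, iff_false]
        exact y.2
      have h2 := h.1 hxD
      rw [this] at h2
      exact Ultrafilter.empty_notMem h2
    exact ⟨hclosed, isClosed_compl_iff.1 hcclosed⟩
  · intro t' h'
    rw [TopologicalSpace.le_def]
    intro U hU
    have hUc : @IsClosed _ t Uᶜ := by
      letI := t
      exact (isOpen_compl_iff (s := Uᶜ)).1 (by simpa using hU)
    have hst := (ht Uᶜ).1 hUc
    have hkey := key t' h' Uᶜ hst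
    letI := t'
    simpa using isClosed_compl_iff.1 hkey
end

section
/- Let X and Y be sets, 𝓕 a nonempty collection of subsets of X, and 𝓖 a nonempty collection of subsets of Y. If f : X → Y is a function such that f⁻¹(G) ∈ 𝓕 for every G ∈ 𝓖, then f is continuous as a map from X with the 𝓕-ultrafilter topology to Y with the 𝓖-ultrafilter topology. -/
open Set

/-- Let `𝓕` (resp. `𝓖`) be a nonempty collection of subsets of `X` (resp. `Y`).  If
`f : X → Y` satisfies `f⁻¹(G) ∈ 𝓕` for every `G ∈ 𝓖`, then `f` is continuous from `X` with
the `𝓕`-ultrafilter topology to `Y` with the `𝓖`-ultrafilter topology. -/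
theorem stmt13 {X Y : Type*} (𝓕 : Set (Set X)) (𝓖 : Set (Set Y))
    (h𝓕 : 𝓕.Nonempty) (h𝓖 : 𝓖.Nonempty)
    (f : X → Y) (hf : ∀ G ∈ 𝓖, f ⁻¹' G ∈ 𝓕)
    (tX : TopologicalSpace X) (tY : TopologicalSpace Y)
    (htX : ∀ C : Set X, @IsClosed X tX C ↔ UStable 𝓕 C)
    (htY : ∀ C : Set Y, @IsClosed Y tY C ↔ UStable 𝓖 C) :
    @Continuous X Y tX tY f := by
  rw [continuous_iff_isClosed]
  intro C hC
  rw [htY] at hC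
  rw [htX]
  intro 𝒰 x hx
  set g : (f ⁻¹' C : Set X) → C := fun a => ⟨f a.1, a.2⟩ with hg
  refine hC (𝒰.map g) ?_
  intro G hG
  have hpre : (g ⁻¹' (Subtype.val ⁻¹' G) : Set (f ⁻¹' C)) =
      Subtype.val ⁻¹' (f ⁻¹' G) := rfl
  have := hx (f ⁻¹' G) (hf G hG)
  simpa [Ultrafilter.mem_map, hpre] using this
end

section
/- Let (X, 𝒯) be a T₀ topological space and 𝓑 a basis of open sets of X such that the 𝓑-ultrafilter topology on X is compact. Then the patch topology induced by 𝒯 (the topology whose subbasis of open sets consists of all open compact subsets of (X, 𝒯) together with their complements) is equal to the 𝓑-ultrafilter topology. -/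
open Set

lemma basic_stable {X : Type*} {𝓑 : Set (Set X)} {B : Set X} (hB : B ∈ 𝓑) :
    UStable 𝓑 B := by
  intro 𝒰 x hx
  have := (hx B hB).mpr
  rw [Subtype.coe_preimage_self] at this
  exact this Filter.univ_mem

lemma basic_compl_stable {X : Type*} {𝓑 : Set (Set X)} {B : Set X} (hB : B ∈ 𝓑) :
    UStable 𝓑 Bᶜ := by
  intro 𝒰 x hx
  intro hxB
  have h := (hx B hB).mp hxB
  have : (Subtype.val ⁻¹' B : Set ↥(Bᶜ)) = ∅ := by
    ext y; simp [y.2]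
  rw [this] at h
  exact 𝒰.empty_notMem h

lemma openCompact_stable {X : Type*} [𝒯 : TopologicalSpace X] {𝓑 : Set (Set X)}
    (h𝓑 : TopologicalSpace.IsTopologicalBasis 𝓑) {U : Set X} (hUo : IsOpen U) (hUc : IsCompact U) :
    UStable 𝓑 U := by
  intro 𝒰 x hx
  have hcover : U ⊆ ⋃ i : {s // s ∈ 𝓑 ∧ s ⊆ U}, (i : Set X) := by
    intro y hy
    obtain ⟨B, hB, hyB, hBU⟩ := h𝓑.exists_subset_of_mem_open hy hUo
    exact mem_iUnion.mpr ⟨⟨B, hB, hBU⟩, hyB⟩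
  obtain ⟨t, ht⟩ := hUc.elim_finite_subcover (fun i : {s // s ∈ 𝓑 ∧ s ⊆ U} => (i : Set X))
    (fun i => h𝓑.isOpen i.2.1) hcover
  have huniv : (Subtype.val ⁻¹' U : Set U) = univ := Subtype.coe_preimage_self U
  have hmem : (⋃ i ∈ t, (Subtype.val ⁻¹' (i : Set X) : Set U)) ∈ 𝒰 := by
    apply Filter.mem_of_superset Filter.univ_mem
    rw [← huniv]
    intro y hy
    have := ht y.2
    simp only [mem_iUnion] at this ⊢
    obtain ⟨i, hit, hyi⟩ := this
    exact ⟨i, hit, hyi⟩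
  rw [← Finset.set_biUnion_coe, Ultrafilter.finite_biUnion_mem_iff t.finite_toSet] at hmem
  obtain ⟨i, _, hi⟩ := hmem
  exact i.2.2 ((hx i i.2.1).mpr hi)

/-- Let `(X, 𝒯)` be a T₀ space and `𝓑` a basis of open sets of `X` such that the
`𝓑`-ultrafilter topology `u` is compact.  Then the patch topology induced by `𝒯` (the topology
generated by the subbasis consisting of the `𝒯`-open `𝒯`-compact subsets of `X` and their
complements) equals `u`. -/
theorem stmt15 {X : Type*} (𝒯 : TopologicalSpace X) (h₀ : @T0Space X 𝒯)
    (𝓑 : Set (Set X)) (h𝓑 : @TopologicalSpace.IsTopologicalBasis X 𝒯 𝓑)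
    (u : TopologicalSpace X)
    (hu : ∀ C : Set X, @IsClosed X u C ↔ UStable 𝓑 C)
    (hcomp : @CompactSpace X u) :
    TopologicalSpace.generateFrom
      ({U : Set X | @IsOpen X 𝒯 U ∧ @IsCompact X 𝒯 U} ∪
        compl '' {U : Set X | @IsOpen X 𝒯 U ∧ @IsCompact X 𝒯 U}) = u := by
  set S : Set (Set X) := {U : Set X | @IsOpen X 𝒯 U ∧ @IsCompact X 𝒯 U} ∪
    compl '' {U : Set X | @IsOpen X 𝒯 U ∧ @IsCompact X 𝒯 U} with hS
  set p := TopologicalSpace.generateFrom S with hp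
  have hBopen : ∀ B ∈ 𝓑, @IsOpen X u B := fun B hB =>
    (@isClosed_compl_iff X u B).mp ((hu Bᶜ).mpr (basic_compl_stable hB))
  have hBclosed : ∀ B ∈ 𝓑, @IsClosed X u B := fun B hB => (hu B).mpr (basic_stable hB)
  have hTle : u ≤ 𝒯 := by
    rw [@TopologicalSpace.IsTopologicalBasis.eq_generateFrom X 𝒯 𝓑 h𝓑]
    exact @le_generateFrom X u 𝓑 hBopen
  have hBcompact : ∀ B ∈ 𝓑, @IsCompact X 𝒯 B := by
    intro B hB
    have h1 : @IsCompact X u B := @IsClosed.isCompact X u B hcomp (hBclosed B hB)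
    have h2 := @IsCompact.image X X u 𝒯 B id h1 (@continuous_id_of_le X u 𝒯 hTle)
    rwa [Set.image_id] at h2
  have hup : u ≤ p := by
    refine @le_generateFrom X u S ?_
    rintro s (hs | ⟨V, hV, rfl⟩)
    · exact @IsOpen.mono X u 𝒯 s hs.1 hTle
    · exact (@isOpen_compl_iff X V u).mpr ((hu V).mpr
        (@openCompact_stable X 𝒯 𝓑 h𝓑 V hV.1 hV.2))
  have hSmem : ∀ B ∈ 𝓑, B ∈ S ∧ Bᶜ ∈ S := by
    intro B hB
    have hBo := @TopologicalSpace.IsTopologicalBasis.isOpen X 𝒯 B 𝓑 h𝓑 hB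
    exact ⟨Or.inl ⟨hBo, hBcompact B hB⟩, Or.inr ⟨B, ⟨hBo, hBcompact B hB⟩, rfl⟩⟩
  have hpt2 : @T2Space X p := by
    constructor
    intro x y hxy
    obtain ⟨U, hUo, hxor⟩ := @exists_isOpen_xor'_mem X 𝒯 h₀ x y hxy
    rcases hxor with ⟨hxU, hyU⟩ | ⟨hyU, hxU⟩
    · obtain ⟨B, hB, hxB, hBU⟩ :=
        @TopologicalSpace.IsTopologicalBasis.exists_subset_of_mem_open X 𝒯 𝓑 h𝓑 x U hxU hUo
      exact ⟨B, Bᶜ, TopologicalSpace.GenerateOpen.basic B (hSmem B hB).1,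
        TopologicalSpace.GenerateOpen.basic Bᶜ (hSmem B hB).2, hxB,
        fun h => hyU (hBU h), disjoint_compl_right⟩
    · obtain ⟨B, hB, hyB, hBU⟩ :=
        @TopologicalSpace.IsTopologicalBasis.exists_subset_of_mem_open X 𝒯 𝓑 h𝓑 y U hyU hUo
      exact ⟨Bᶜ, B, TopologicalSpace.GenerateOpen.basic Bᶜ (hSmem B hB).2,
        TopologicalSpace.GenerateOpen.basic B (hSmem B hB).1,
        fun h => hxU (hBU h), hyB, disjoint_compl_left⟩
  have hpu : p ≤ u := by
    have hclosed : ∀ C : Set X, @IsClosed X u C → @IsClosed X p C := by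
      intro C hC
      have h1 : @IsCompact X u C := @IsClosed.isCompact X u C hcomp hC
      have h2 : @IsCompact X p C := by
        have := @IsCompact.image X X u p C id h1 (@continuous_id_of_le X u p hup)
        rwa [Set.image_id] at this
      exact @IsCompact.isClosed X p hpt2 C h2
    rw [TopologicalSpace.le_def]
    intro V hV
    have hc : @IsClosed X p Vᶜ :=
      hclosed Vᶜ ((@isClosed_compl_iff X u V).mpr hV)
    exact (@isClosed_compl_iff X p V).mp hc
  exact le_antisymm hpu hup
end

section
/- Let (X, 𝒯) be a topological space and 𝓕 a collection of subsets of X containing at least a basis of open sets of (X, 𝒯). If Y is a compact subspace of (X, 𝒯), then the generic closure of Y with respect to 𝒯 (the set of all points x ∈ X such that every 𝒯-open neighborhood of some point y ∈ Y contains x; equivalently, the set of generizations of points of Y) is closed in the 𝓕-ultrafilter topology on X. -/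
open Set

theorem aux_stable {X : Type*} [𝒯 : TopologicalSpace X] (𝓕 : Set (Set X))
    (hbasis : ∃ 𝓑 ⊆ 𝓕, TopologicalSpace.IsTopologicalBasis 𝓑)
    (Y : Set X) (hY : IsCompact Y) :
    UStable 𝓕 {x : X | ∃ y ∈ Y, y ∈ closure {x}} := by
  intro 𝒰 x hx
  obtain ⟨𝓑, h𝓑𝓕, hB⟩ := hbasis
  choose g hgY hgc using fun z : {x : X | ∃ y ∈ Y, y ∈ closure {x}} => z.2
  let F : Ultrafilter X := 𝒰.map g
  have hFY : (F : Filter X) ≤ Filter.principal Y := by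
    refine Filter.le_principal_iff.mpr ?_
    exact Ultrafilter.mem_map.mpr (Filter.univ_mem' fun z => hgY z)
  obtain ⟨y₀, hy₀Y, hle⟩ := hY.ultrafilter_le_nhds F hFY
  refine ⟨y₀, hy₀Y, ?_⟩
  rw [mem_closure_iff]
  intro o ho hyo
  obtain ⟨B, hB𝓑, hy₀B, hBo⟩ := hB.exists_subset_of_mem_open hyo ho
  have hBopen : IsOpen B := hB.isOpen hB𝓑
  have hBF : B ∈ F := hle (hBopen.mem_nhds hy₀B)
  have hsub : g ⁻¹' B ⊆ (Subtype.val ⁻¹' B : Set {x : X | ∃ y ∈ Y, y ∈ closure {x}}) := by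
    intro z hz
    obtain ⟨w, hw⟩ := mem_closure_iff.mp (hgc z) B hBopen hz
    have : w = (z : X) := hw.2
    simpa [this] using hw.1
  have hmem : (Subtype.val ⁻¹' B : Set {x : X | ∃ y ∈ Y, y ∈ closure {x}}) ∈ 𝒰 :=
    Filter.mem_of_superset (Ultrafilter.mem_map.mp hBF) hsub
  have hxB : x ∈ B := (hx B (h𝓑𝓕 hB𝓑)).mpr hmem
  exact ⟨x, hBo hxB, rfl⟩

/-- Let `(X, 𝒯)` be a topological space and `𝓕` a collection of subsets of `X` containing at
least a basis of open sets of `(X, 𝒯)`.  If `Y` is a compact subspace of `(X, 𝒯)`, then the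
generic closure of `Y` with respect to `𝒯`, i.e. `{x ∈ X : ∃ y ∈ Y, y ∈ closure {x}}` (the set
of generizations of points of `Y`), is closed in the `𝓕`-ultrafilter topology `u`. -/
theorem stmt19 {X : Type*} (𝒯 : TopologicalSpace X) (𝓕 : Set (Set X))
    (hbasis : ∃ 𝓑 ⊆ 𝓕, @TopologicalSpace.IsTopologicalBasis X 𝒯 𝓑)
    (u : TopologicalSpace X)
    (hu : ∀ C : Set X, @IsClosed X u C ↔ UStable 𝓕 C)
    (Y : Set X) (hY : @IsCompact X 𝒯 Y) :
    @IsClosed X u {x : X | ∃ y ∈ Y, y ∈ @closure X 𝒯 {x}} := by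
  letI := 𝒯
  exact (hu _).mpr (aux_stable 𝓕 hbasis Y hY)
end
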